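/- (Theorem 4.4(i), stable strong duality II under (C7).) Let S ⊆ Z be a nonempty convex cone with nonempty interior int S. Assume Φ is K-convex (with nonempty domain D and 0_Z ∈ π(D)) and condition (C7) holds: 0_Z ∈ π(D) - int S, and for every (x,z) ∈ D with z ∈ S one has (x,0_Z) ∈ D and Φ(x,z) - Φ(x,0_Z) ∈ K. Then for every L ∈ L(X,Y), stable strong duality holds for both pairs: WInf N_L = WMax M_L := M_L ∩ WSup M_L and WInf N_L = WMax M_L⁺ := M_L⁺ ∩ WSup M_L⁺. -/

import Mathlib

open Pointwise

section Defs

variable {X Y Z : Type*}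
  [AddCommGroup X] [Module ℝ X] [TopologicalSpace X]
  [AddCommGroup Y] [Module ℝ Y] [TopologicalSpace Y]
  [AddCommGroup Z] [Module ℝ Z] [TopologicalSpace Z]

/-- The set of weakly supremal elements of `M ⊆ Y` w.r.t. the cone `K`. -/
def WSup (K M : Set Y) : Set Y :=
  {v : Y | (∀ m ∈ M, v - m ∉ -interior K) ∧
    ∀ w : Y, w - v ∈ -interior K → ∃ m ∈ M, w - m ∈ -interior K}

/-- The set of weakly infimal elements of `M ⊆ Y` w.r.t. the cone `K`. -/
def WInf (K M : Set Y) : Set Y :=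
  {v : Y | (∀ m ∈ M, m - v ∉ -interior K) ∧
    ∀ w : Y, v - w ∈ -interior K → ∃ m ∈ M, m - w ∈ -interior K}

/-- The set `Λ_{L,T} = {L(x) + T(z) - Φ(x,z) : (x,z) ∈ D}`, whose weak supremum is
the conjugate value `Φ*(L,T)`. -/
def lamSet (Φ : X × Z → Y) (D : Set (X × Z)) (L : X →L[ℝ] Y) (T : Z →L[ℝ] Y) : Set Y :=
  {y : Y | ∃ p ∈ D, y = L p.1 + T p.2 - Φ p}

/-- The value set `N_L` of the perturbed primal problem `(P^L)`. -/
def primalSet (Φ : X × Z → Y) (D : Set (X × Z)) (L : X →L[ℝ] Y) : Set Y :=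
  {y : Y | ∃ x : X, (x, (0 : Z)) ∈ D ∧ y = Φ (x, 0) - L x}

/-- The value set `M_L` of the dual problem `(D^L)`. -/
def dualSet (K : Set Y) (Φ : X × Z → Y) (D : Set (X × Z)) (L : X →L[ℝ] Y) : Set Y :=
  {y : Y | ∃ T : Z →L[ℝ] Y, -y ∈ WSup K (lamSet Φ D L T)}

/-- The value set `M_L⁺` of the loose dual problem `(D_ℓ^L)`. -/
def dualSetPlus (K : Set Y) (S : Set Z) (Φ : X × Z → Y) (D : Set (X × Z))
    (L : X →L[ℝ] Y) : Set Y :=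
  {y : Y | ∃ T : Z →L[ℝ] Y, (⇑T '' S ⊆ K) ∧ -y ∈ WSup K (lamSet Φ D L T)}

end Defs

set_option linter.unusedSectionVars false


section Aux
variable {W : Type*} [AddCommGroup W] [Module ℝ W] [TopologicalSpace W]
  [IsTopologicalAddGroup W] [ContinuousSMul ℝ W]

lemma cone_add_interior {C : Set W} (hcx : Convex ℝ C)
    (hcone : ∀ ⦃c : ℝ⦄, 0 ≤ c → ∀ ⦃y : W⦄, y ∈ C → c • y ∈ C)
    {k u : W} (hk : k ∈ C) (hu : u ∈ interior C) : k + u ∈ interior C := by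
  have hsub : (fun y => k + y) '' interior C ⊆ C := by
    rintro _ ⟨y, hy, rfl⟩
    have h2 : (2:ℝ) • ((1/2 : ℝ) • k + (1/2 : ℝ) • y) ∈ C :=
      hcone (by norm_num) (hcx hk (interior_subset hy) (by norm_num) (by norm_num) (by norm_num))
    have he : (2:ℝ) • ((1/2 : ℝ) • k + (1/2 : ℝ) • y) = k + y := by module
    rwa [he] at h2
  exact interior_maximal hsub ((isOpenMap_add_left k) _ isOpen_interior) ⟨u, hu, rfl⟩

lemma cone_smul_interior {C : Set W}
    (hcone : ∀ ⦃c : ℝ⦄, 0 ≤ c → ∀ ⦃y : W⦄, y ∈ C → c • y ∈ C)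
    {c : ℝ} (hc : 0 < c) {u : W} (hu : u ∈ interior C) : c • u ∈ interior C := by
  have hsub : (fun y : W => c • y) '' interior C ⊆ C := by
    rintro _ ⟨y, hy, rfl⟩
    exact hcone hc.le (interior_subset hy)
  exact interior_maximal hsub ((isOpenMap_smul₀ hc.ne') _ isOpen_interior) ⟨u, hu, rfl⟩

lemma exists_pos_smul_add_mem {C : Set W} {k : W} (hk : k ∈ interior C) (y : W) :
    ∃ δ : ℝ, 0 < δ ∧ k + δ • y ∈ interior C := by
  have hcont : Continuous fun δ : ℝ => k + δ • y :=
    continuous_const.add (continuous_id.smul continuous_const)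
  have hmem : (fun δ : ℝ => k + δ • y) ⁻¹' interior C ∈ nhds (0:ℝ) := by
    apply hcont.continuousAt.preimage_mem_nhds
    have : k + (0:ℝ) • y = k := by simp
    rw [this]
    exact isOpen_interior.mem_nhds hk
  obtain ⟨ε, hε, hsub⟩ := Metric.mem_nhds_iff.mp hmem
  refine ⟨ε/2, by positivity, hsub ?_⟩
  simp only [Metric.mem_ball, Real.dist_eq, sub_zero]
  rw [abs_of_pos (by positivity)]
  linarith

lemma nonpos_of_forall_lt {a c : ℝ} (h : ∀ n : ℕ, a + (1/((n:ℝ)+1)) * c < 0) : a ≤ 0 := by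
  have ht : Filter.Tendsto (fun n : ℕ => a + (1/((n:ℝ)+1)) * c) Filter.atTop (nhds (a + 0 * c)) :=
    tendsto_const_nhds.add (tendsto_one_div_add_atTop_nhds_zero_nat.mul_const c)
  have := le_of_tendsto ht (Filter.Eventually.of_forall fun n => (h n).le)
  linarith

end Aux

set_option maxHeartbeats 3200000 in
/-- Theorem 4.4(i) (stable strong duality II under (C7)): stable strong duality
holds for both pairs (P)-(D) and (P)-(D_ℓ). -/
theorem stmt_12
    {X Y Z : Type*}
    [AddCommGroup X] [Module ℝ X] [TopologicalSpace X] [IsTopologicalAddGroup X]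
    [ContinuousSMul ℝ X] [LocallyConvexSpace ℝ X] [T2Space X]
    [AddCommGroup Y] [Module ℝ Y] [TopologicalSpace Y] [IsTopologicalAddGroup Y]
    [ContinuousSMul ℝ Y] [LocallyConvexSpace ℝ Y] [T2Space Y]
    [AddCommGroup Z] [Module ℝ Z] [TopologicalSpace Z] [IsTopologicalAddGroup Z]
    [ContinuousSMul ℝ Z] [LocallyConvexSpace ℝ Z] [T2Space Z]
    (K : Set Y) (hKcl : IsClosed K) (hKcx : Convex ℝ K)
    (hKcone : ∀ ⦃c : ℝ⦄, 0 ≤ c → ∀ ⦃y : Y⦄, y ∈ K → c • y ∈ K)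
    (hKne : K ≠ Set.univ) (hKint : (interior K).Nonempty)
    (Φ : X × Z → Y) (D : Set (X × Z)) (hD : D.Nonempty)
    (hconv : Convex ℝ {p : (X × Z) × Y | p.1 ∈ D ∧ p.2 - Φ p.1 ∈ K})
    (h0 : (0 : Z) ∈ Prod.snd '' D)
    (S : Set Z) (hS : S.Nonempty) (hScx : Convex ℝ S)
    (hScone : ∀ ⦃c : ℝ⦄, 0 ≤ c → ∀ ⦃z : Z⦄, z ∈ S → c • z ∈ S)
    (hSint : (interior S).Nonempty)
    -- condition (C7)
    (hC7a : (0 : Z) ∈ Prod.snd '' D - interior S)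
    (hC7b : ∀ p ∈ D, p.2 ∈ S → (p.1, (0 : Z)) ∈ D ∧ Φ p - Φ (p.1, 0) ∈ K) :
    ∀ L : X →L[ℝ] Y,
      WInf K (primalSet Φ D L) = dualSet K Φ D L ∩ WSup K (dualSet K Φ D L) ∧
      WInf K (primalSet Φ D L)
        = dualSetPlus K S Φ D L ∩ WSup K (dualSetPlus K S Φ D L) := by
  -- basic facts about the cones
  obtain ⟨k₁, hk₁⟩ := hKint
  obtain ⟨s₁, hs₁⟩ := hSint
  obtain ⟨p₀, hp₀⟩ := hD
  have h0K : (0:Y) ∈ K := by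
    simpa using hKcone le_rfl (interior_subset hk₁)
  have hneg : ∀ a b : Y, a - b ∈ -interior K ↔ b - a ∈ interior K := by
    intro a b; rw [Set.mem_neg, neg_sub]
  intro L
  -- the strong duality lemma: every weak lower bound of the primal set is
  -- attained by a dual element with `T (S) ⊆ K`
  have strong : ∀ vb : Y,
      (∀ x : X, (x, (0:Z)) ∈ D → vb - (Φ (x, 0) - L x) ∉ interior K) →
      ∃ T : Z →L[ℝ] Y, (⇑T '' S ⊆ K) ∧
        ∀ p ∈ D, Φ p - L p.1 - T p.2 - vb ∉ -interior K := by
    intro vb hvb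
    have hstar : ∀ p ∈ D, p.2 ∈ S → vb - (Φ p - L p.1) ∉ interior K := by
      intro p hp hpS hmem
      obtain ⟨hp0, hK0⟩ := hC7b p hp hpS
      refine hvb p.1 hp0 ?_
      have h := cone_add_interior hKcx hKcone hK0 hmem
      have he : Φ p - Φ (p.1, 0) + (vb - (Φ p - L p.1)) = vb - (Φ (p.1, 0) - L p.1) := by
        abel
      rwa [he] at h
    set A : Set (Z × Y) :=
      {q | ∃ x z s k, (x, z) ∈ D ∧ s ∈ interior S ∧ k ∈ interior K ∧
        q = (z - s, Φ (x, z) - L x + k - vb)} with hAdef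
    have hAopen : IsOpen A := by
      rw [isOpen_iff_mem_nhds]
      rintro q ⟨x, z, s, k, hxz, hs, hk, rfl⟩
      have hcont : Continuous fun q : Z × Y => (z - q.1, q.2 - (Φ (x, z) - L x - vb)) :=
        (continuous_const.sub continuous_fst).prodMk (continuous_snd.sub continuous_const)
      have hnb : (fun q : Z × Y => (z - q.1, q.2 - (Φ (x, z) - L x - vb))) ⁻¹'
          (interior S ×ˢ interior K) ∈ nhds ((z - s, Φ (x, z) - L x + k - vb) : Z × Y) := by
        apply hcont.continuousAt.preimage_mem_nhds
        apply (isOpen_interior.prod isOpen_interior).mem_nhds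
        constructor
        · show z - (z - s) ∈ interior S
          have : z - (z - s) = s := by abel
          rw [this]; exact hs
        · show Φ (x, z) - L x + k - vb - (Φ (x, z) - L x - vb) ∈ interior K
          have : Φ (x, z) - L x + k - vb - (Φ (x, z) - L x - vb) = k := by abel
          rw [this]; exact hk
      refine Filter.mem_of_superset hnb ?_
      rintro ⟨a, b⟩ ⟨h1, h2⟩
      refine ⟨x, z, z - a, b - (Φ (x, z) - L x - vb), hxz, h1, h2, ?_⟩
      rw [Prod.ext_iff]
      constructor
      · show a = z - (z - a); abel
      · show b = Φ (x, z) - L x + (b - (Φ (x, z) - L x - vb)) - vb; abel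
    have hAconv : Convex ℝ A := by
      rintro q₁ ⟨x₁, z₁, sa₁, ka₁, h₁, hsa₁, hka₁, rfl⟩ q₂ ⟨x₂, z₂, sa₂, ka₂, h₂, hsa₂, hka₂, rfl⟩
        a b ha hb hab
      obtain rfl : b = 1 - a := by linarith
      have hm₁ : ((x₁, z₁), Φ (x₁, z₁)) ∈ {p : (X × Z) × Y | p.1 ∈ D ∧ p.2 - Φ p.1 ∈ K} :=
        ⟨h₁, by simpa using h0K⟩
      have hm₂ : ((x₂, z₂), Φ (x₂, z₂)) ∈ {p : (X × Z) × Y | p.1 ∈ D ∧ p.2 - Φ p.1 ∈ K} :=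
        ⟨h₂, by simpa using h0K⟩
      have hc := hconv hm₁ hm₂ ha hb hab
      simp only [Set.mem_setOf_eq, Prod.smul_mk, Prod.mk_add_mk] at hc
      obtain ⟨hD', hK'⟩ := hc
      refine ⟨a • x₁ + (1-a) • x₂, a • z₁ + (1-a) • z₂, a • sa₁ + (1-a) • sa₂,
        (a • Φ (x₁, z₁) + (1-a) • Φ (x₂, z₂) - Φ (a • x₁ + (1-a) • x₂, a • z₁ + (1-a) • z₂))
          + (a • ka₁ + (1-a) • ka₂),
        hD', hScx.interior hsa₁ hsa₂ ha hb hab,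
        cone_add_interior hKcx hKcone hK' (hKcx.interior hka₁ hka₂ ha hb hab), ?_⟩
      have hL : L (a • x₁ + (1-a) • x₂) = a • L x₁ + (1-a) • L x₂ := by
        simp [map_add, map_smul]
      simp only [Prod.smul_mk, Prod.mk_add_mk, Prod.mk.injEq]
      constructor
      · module
      · rw [hL]; module
    have h0A : (0 : Z × Y) ∉ A := by
      rintro ⟨x, z, s, k, hxz, hs, hk, heq⟩
      have h1 : (0:Z) = z - s := congrArg Prod.fst heq
      have h2 : (0:Y) = Φ (x, z) - L x + k - vb := congrArg Prod.snd heq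
      have hzs : z = s := sub_eq_zero.mp h1.symm
      have hzS : z ∈ S := hzs ▸ interior_subset hs
      refine hstar (x, z) hxz hzS ?_
      show vb - (Φ (x, z) - L x) ∈ interior K
      have h3 : vb - (Φ (x, z) - L x) - k = -(Φ (x, z) - L x + k - vb) := by abel
      rw [← h2, neg_zero] at h3
      have h4 : vb - (Φ (x, z) - L x) = k := sub_eq_zero.mp h3
      rw [h4]; exact hk
    obtain ⟨f, hf⟩ := geometric_hahn_banach_open_point hAconv hAopen h0A
    set f₁ : Z →L[ℝ] ℝ := f.comp (ContinuousLinearMap.inl ℝ Z Y) with hf₁def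
    set f₂ : Y →L[ℝ] ℝ := f.comp (ContinuousLinearMap.inr ℝ Z Y) with hf₂def
    have hsplit : ∀ (z : Z) (y : Y), f (z, y) = f₁ z + f₂ y := by
      intro z y
      have he : ((z, y) : Z × Y) = ((z, (0:Y)) + ((0:Z), y)) := by simp
      rw [he, map_add]
      rfl
    have hraw : ∀ p ∈ D, ∀ s ∈ interior S, ∀ k ∈ interior K,
        f₁ (p.2 - s) + f₂ (Φ p - L p.1 + k - vb) < 0 := by
      intro p hp s hs k hk
      have hmem : ((p.2 - s, Φ p - L p.1 + k - vb) : Z × Y) ∈ A := by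
        refine ⟨p.1, p.2, s, k, by simpa using hp, hs, hk, ?_⟩
        rw [Prod.mk.eta]
      have h := hf _ hmem
      rw [map_zero, hsplit] at h
      exact h
    have hf₂K : ∀ k ∈ K, f₂ k ≤ 0 := by
      intro k hk
      by_contra hcon
      push_neg at hcon
      obtain ⟨n, hn⟩ := exists_nat_gt
        ((-(f₁ (p₀.2 - s₁) + f₂ (Φ p₀ - L p₀.1 + k₁ - vb))) / f₂ k)
      have hkn : (n:ℝ) • k + k₁ ∈ interior K :=
        cone_add_interior hKcx hKcone (hKcone n.cast_nonneg hk) hk₁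
      have h1 := hraw p₀ hp₀ s₁ hs₁ _ hkn
      have he : Φ p₀ - L p₀.1 + ((n:ℝ) • k + k₁) - vb
          = (Φ p₀ - L p₀.1 + k₁ - vb) + (n:ℝ) • k := by abel
      rw [he, map_add, map_smul, smul_eq_mul] at h1
      rw [div_lt_iff₀ hcon] at hn
      linarith
    have hf₁S : ∀ s ∈ S, 0 ≤ f₁ s := by
      intro s hs
      by_contra hcon
      push_neg at hcon
      obtain ⟨n, hn⟩ := exists_nat_gt
        ((-(f₁ (p₀.2 - s₁) + f₂ (Φ p₀ - L p₀.1 + k₁ - vb))) / (-(f₁ s)))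
      have hsn : (n:ℝ) • s + s₁ ∈ interior S :=
        cone_add_interior hScx hScone (hScone n.cast_nonneg hs) hs₁
      have h1 := hraw p₀ hp₀ _ hsn k₁ hk₁
      have he : p₀.2 - ((n:ℝ) • s + s₁) = (p₀.2 - s₁) - (n:ℝ) • s := by abel
      rw [he, map_sub, map_smul, smul_eq_mul] at h1
      rw [div_lt_iff₀ (by linarith : (0:ℝ) < -(f₁ s))] at hn
      nlinarith
    have hclub : ∀ p ∈ D, f₁ p.2 + f₂ (Φ p - L p.1 - vb) ≤ 0 := by
      intro p hp
      refine nonpos_of_forall_lt (c := f₂ k₁ - f₁ s₁) ?_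
      intro n
      have hε : (0:ℝ) < 1/((n:ℝ)+1) := by positivity
      have h1 := hraw p hp _ (cone_smul_interior hScone hε hs₁)
        _ (cone_smul_interior hKcone hε hk₁)
      have he : Φ p - L p.1 + (1/((n:ℝ)+1)) • k₁ - vb
          = (Φ p - L p.1 - vb) + (1/((n:ℝ)+1)) • k₁ := by abel
      rw [map_sub, map_smul, smul_eq_mul, he, map_add, map_smul, smul_eq_mul] at h1
      ring_nf
      ring_nf at h1
      linarith
    have hk₀ : ∃ k₀ ∈ interior K, f₂ k₀ < 0 := by
      by_contra hcon
      push_neg at hcon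
      have hzero : ∀ y : Y, f₂ y = 0 := by
        intro y
        obtain ⟨δ, hδ, hδmem⟩ := exists_pos_smul_add_mem hk₁ y
        have e1 : f₂ (k₁ + δ • y) = 0 :=
          le_antisymm (hf₂K _ (interior_subset hδmem)) (hcon _ hδmem)
        have e0 : f₂ k₁ = 0 :=
          le_antisymm (hf₂K _ (interior_subset hk₁)) (hcon _ hk₁)
        rw [map_add, map_smul, smul_eq_mul, e0, zero_add] at e1
        rcases mul_eq_zero.mp e1 with h | h
        · exact absurd h hδ.ne'
        · exact h
      obtain ⟨z₀, hz₀D, w₀, hw₀, hzw⟩ : ∃ z₀ ∈ Prod.snd '' D, ∃ w₀ ∈ interior S, z₀ - w₀ = 0 := by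
        rw [Set.mem_sub] at hC7a
        exact hC7a
      obtain ⟨p₁, hp₁D, hp₁z⟩ := hz₀D
      have hz₀S : p₁.2 ∈ interior S := by
        rw [hp₁z]
        rw [sub_eq_zero] at hzw
        rw [hzw]; exact hw₀
      have h1 := hraw p₁ hp₁D p₁.2 hz₀S k₁ hk₁
      rw [hzero, sub_self, map_zero] at h1
      linarith
    obtain ⟨k₀, hk₀K, hk₀f⟩ := hk₀
    set α : ℝ := -f₂ k₀ with hα
    have hαpos : 0 < α := by rw [hα]; linarith
    have hf₂int : ∀ k ∈ interior K, f₂ k < 0 := by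
      intro k hk
      rcases lt_or_eq_of_le (hf₂K k (interior_subset hk)) with h | h
      · exact h
      · exfalso
        obtain ⟨δ, hδ, hδmem⟩ := exists_pos_smul_add_mem hk (-k₀)
        have h2 := hf₂K _ (interior_subset hδmem)
        rw [map_add, map_smul, map_neg, smul_eq_mul, ← h] at h2
        nlinarith
    set T : Z →L[ℝ] Y := f₁.smulRight (α⁻¹ • k₀) with hT
    have hTapp : ∀ z : Z, T z = (f₁ z * α⁻¹) • k₀ := by
      intro z
      rw [hT, ContinuousLinearMap.smulRight_apply, smul_smul]
    have hf₂T : ∀ z : Z, f₂ (T z) = -f₁ z := by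
      intro z
      rw [hTapp, map_smul, smul_eq_mul]
      have : f₂ k₀ = -α := by rw [hα]; ring
      rw [this]
      field_simp
    refine ⟨T, ?_, ?_⟩
    · rintro _ ⟨s, hs, rfl⟩
      rw [hTapp]
      exact hKcone (mul_nonneg (hf₁S s hs) (inv_nonneg.mpr hαpos.le)) (interior_subset hk₀K)
    · intro p hp hmem
      rw [Set.mem_neg] at hmem
      have h2 := hf₂int _ hmem
      rw [map_neg] at h2
      have h3 := hclub p hp
      have he : Φ p - L p.1 - T p.2 - vb = (Φ p - L p.1 - vb) - T p.2 := by abel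
      rw [he, map_sub, hf₂T] at h2
      linarith
  -- the ray lemma: from a weak upper bound of `lamSet` produce an element of
  -- its weak supremum below it along the ray directed by `-k₁`
  have ray : ∀ (T : Z →L[ℝ] Y) (q : Y),
      (∀ m ∈ lamSet Φ D L T, q - m ∉ -interior K) →
      ∃ t : ℝ, 0 ≤ t ∧ q - t • k₁ ∈ WSup K (lamSet Φ D L T) := by
    intro T q hq
    set E : Set Y := {y | ∃ m ∈ lamSet Φ D L T, y - m ∈ -interior K} with hEdef
    have hqE : q ∉ E := by
      rintro ⟨m, hm, hmem⟩
      exact hq m hm hmem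
    have hEopen : IsOpen E := by
      rw [isOpen_iff_mem_nhds]
      rintro y ⟨m, hm, hmem⟩
      have hcont : Continuous fun y' : Y => y' - m := continuous_id.sub continuous_const
      have hnb : (fun y' : Y => y' - m) ⁻¹' (-interior K) ∈ nhds y :=
        hcont.continuousAt.preimage_mem_nhds (isOpen_interior.neg.mem_nhds hmem)
      exact Filter.mem_of_superset hnb fun y' hy' => ⟨m, hm, hy'⟩
    have hElower : ∀ y ∈ E, ∀ u ∈ interior K, y - u ∈ E := by
      rintro y ⟨m, hm, hmem⟩ u hu
      refine ⟨m, hm, ?_⟩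
      rw [Set.mem_neg] at hmem ⊢
      have h := cone_add_interior hKcx hKcone (interior_subset hu) hmem
      have he : u + -(y - m) = -(y - u - m) := by abel
      rwa [he] at h
    set B : Set ℝ := {t | q - t • k₁ ∈ E} with hBdef
    have hup : ∀ t ∈ B, ∀ t' : ℝ, t ≤ t' → t' ∈ B := by
      intro t ht t' htt'
      rcases eq_or_lt_of_le htt' with rfl | hlt
      · exact ht
      · have hk' : (t' - t) • k₁ ∈ interior K :=
          cone_smul_interior hKcone (by linarith) hk₁
        have h := hElower _ ht _ hk'
        have he : q - t • k₁ - (t' - t) • k₁ = q - t' • k₁ := by module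
        show q - t' • k₁ ∈ E
        rwa [he] at h
    have hBne : B.Nonempty := by
      obtain ⟨δ, hδ, hδmem⟩ := exists_pos_smul_add_mem hk₁ ((L p₀.1 + T p₀.2 - Φ p₀) - q)
      refine ⟨δ⁻¹, ⟨L p₀.1 + T p₀.2 - Φ p₀, ⟨p₀, hp₀, rfl⟩, ?_⟩⟩
      rw [Set.mem_neg]
      have h := cone_smul_interior hKcone (inv_pos.mpr hδ) hδmem
      have he : δ⁻¹ • (k₁ + δ • (L p₀.1 + T p₀.2 - Φ p₀ - q))
          = -(q - δ⁻¹ • k₁ - (L p₀.1 + T p₀.2 - Φ p₀)) := by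
        rw [smul_add, smul_smul, inv_mul_cancel₀ hδ.ne', one_smul]
        abel
      rwa [he] at h
    have hlb : ∀ t ∈ B, (0:ℝ) ≤ t := by
      intro t ht
      by_contra hcon
      push_neg at hcon
      have h0 : (0:ℝ) ∈ B := hup t ht 0 hcon.le
      have hqem : q ∈ E := by
        have : q - (0:ℝ) • k₁ = q := by rw [zero_smul, sub_zero]
        rw [← this]
        exact h0
      exact hqE hqem
    have hbdd : BddBelow B := ⟨0, hlb⟩
    have ht₀0 : 0 ≤ sInf B := le_csInf hBne hlb
    have ht₀B : sInf B ∉ B := by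
      intro hmem
      have hBopen : IsOpen B :=
        hEopen.preimage (continuous_const.sub (continuous_id.smul continuous_const))
      obtain ⟨ε, hε, hsub⟩ := Metric.isOpen_iff.mp hBopen _ hmem
      have h2 : sInf B - ε/2 ∈ B := by
        apply hsub
        simp only [Metric.mem_ball, Real.dist_eq]
        rw [show sInf B - ε/2 - sInf B = -(ε/2) by ring, abs_neg, abs_of_pos (by positivity)]
        linarith
      have := csInf_le hbdd h2
      linarith
    have hup' : ∀ ε : ℝ, 0 < ε → q - (sInf B + ε) • k₁ ∈ E := by
      intro ε hε
      obtain ⟨t, htB, htlt⟩ := exists_lt_of_csInf_lt hBne (by linarith : sInf B < sInf B + ε)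
      exact hup t htB _ htlt.le
    refine ⟨sInf B, ht₀0, ?_, ?_⟩
    · intro m hm hmem
      exact ht₀B ⟨m, hm, hmem⟩
    · intro w hw
      rw [Set.mem_neg] at hw
      have hκ : (q - sInf B • k₁) - w ∈ interior K := by
        have he : -(w - (q - sInf B • k₁)) = (q - sInf B • k₁) - w := by abel
        rwa [he] at hw
      obtain ⟨δ, hδ, hδmem⟩ := exists_pos_smul_add_mem hκ (-k₁)
      have hE1 : q - (sInf B + δ) • k₁ ∈ E := hup' δ hδ
      have hu' : q - (sInf B + δ) • k₁ - w ∈ interior K := by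
        have he : (q - sInf B • k₁ - w) + δ • (-k₁) = q - (sInf B + δ) • k₁ - w := by module
        rwa [he] at hδmem
      have hwE := hElower _ hE1 _ hu'
      have he2 : q - (sInf B + δ) • k₁ - (q - (sInf B + δ) • k₁ - w) = w := by abel
      rw [he2] at hwE
      exact hwE
  -- the common combination argument
  have key : ∀ M : Set Y,
      (∀ d ∈ M, ∃ T : Z →L[ℝ] Y, -d ∈ WSup K (lamSet Φ D L T)) →
      (∀ T : Z →L[ℝ] Y, ⇑T '' S ⊆ K → ∀ u ∈ WSup K (lamSet Φ D L T), -u ∈ M) →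
      WInf K (primalSet Φ D L) = M ∩ WSup K M := by
    intro M hM1 hM2
    ext vb
    constructor
    · rintro ⟨hv1, hv2⟩
      have hlb : ∀ x : X, (x, (0:Z)) ∈ D → vb - (Φ (x, 0) - L x) ∉ interior K := by
        intro x hx hmem
        exact hv1 _ ⟨x, hx, rfl⟩ ((hneg _ _).mpr hmem)
      obtain ⟨T, hTS, hT⟩ := strong vb hlb
      have hWS : -vb ∈ WSup K (lamSet Φ D L T) := by
        constructor
        · rintro m ⟨p, hp, rfl⟩ hmem
          refine hT p hp ?_
          have he : -vb - (L p.1 + T p.2 - Φ p) = Φ p - L p.1 - T p.2 - vb := by abel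
          rwa [he] at hmem
        · intro w hw
          have hw' : vb - (-w) ∈ -interior K := by
            have he : vb - (-w) = w - (-vb) := by abel
            rw [he]; exact hw
          obtain ⟨m, ⟨x, hx, rfl⟩, hm2⟩ := hv2 (-w) hw'
          refine ⟨L x + T 0 - Φ (x, 0), ⟨(x, 0), hx, rfl⟩, ?_⟩
          have he : w - (L x + T (0:Z) - Φ (x, 0)) = Φ (x, 0) - L x - -w := by
            rw [map_zero]; abel
          rw [he]; exact hm2
      have hvbM : vb ∈ M := by
        have h := hM2 T hTS _ hWS
        rwa [neg_neg] at h
      refine ⟨hvbM, ?_, ?_⟩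
      · intro d hd hmem
        obtain ⟨m, ⟨x, hx, rfl⟩, hm2⟩ := hv2 d hmem
        obtain ⟨T', hT'⟩ := hM1 d hd
        refine hT'.1 (L x + T' 0 - Φ (x, 0)) ⟨(x, 0), hx, rfl⟩ ?_
        have he : -d - (L x + T' (0:Z) - Φ (x, 0)) = Φ (x, 0) - L x - d := by
          rw [map_zero]; abel
        rw [he]; exact hm2
      · intro w hw
        exact ⟨vb, hvbM, hw⟩
    · rintro ⟨hdM, hds⟩
      obtain ⟨T₀, hT₀⟩ := hM1 _ hdM
      constructor
      · rintro m ⟨x, hx, rfl⟩ hmem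
        refine hT₀.1 (L x + T₀ 0 - Φ (x, 0)) ⟨(x, 0), hx, rfl⟩ ?_
        have he : -vb - (L x + T₀ (0:Z) - Φ (x, 0)) = Φ (x, 0) - L x - vb := by
          rw [map_zero]; abel
        rw [he]; exact hmem
      · intro w hw
        by_contra hcon
        push_neg at hcon
        have hlb : ∀ x : X, (x, (0:Z)) ∈ D → w - (Φ (x, 0) - L x) ∉ interior K := by
          intro x hx hmem
          exact hcon _ ⟨x, hx, rfl⟩ ((hneg _ _).mpr hmem)
        obtain ⟨T, hTS, hT⟩ := strong w hlb
        have hq : ∀ m ∈ lamSet Φ D L T, -w - m ∉ -interior K := by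
          rintro m ⟨p, hp, rfl⟩ hmem
          refine hT p hp ?_
          have he : -w - (L p.1 + T p.2 - Φ p) = Φ p - L p.1 - T p.2 - w := by abel
          rwa [he] at hmem
        obtain ⟨t, ht0, hu⟩ := ray T (-w) hq
        have hmM : -(-w - t • k₁) ∈ M := hM2 T hTS _ hu
        refine hds.1 _ hmM ?_
        rw [Set.mem_neg]
        have h1 : w - vb ∈ interior K := by
          rw [Set.mem_neg] at hw
          have he : -(vb - w) = w - vb := by abel
          rwa [he] at hw
        have h2 : t • k₁ + (w - vb) ∈ interior K :=
          cone_add_interior hKcx hKcone (hKcone ht0 (interior_subset hk₁)) h1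
        have he : -(vb - -(-w - t • k₁)) = t • k₁ + (w - vb) := by abel
        rw [he]; exact h2
  constructor
  · refine key _ ?_ ?_
    · rintro d ⟨T, hT⟩
      exact ⟨T, hT⟩
    · intro T hTS u hu
      exact ⟨T, by rwa [neg_neg]⟩
  · refine key _ ?_ ?_
    · rintro d ⟨T, hTS, hT⟩
      exact ⟨T, hT⟩
    · intro T hTS u hu
      exact ⟨T, hTS, by rwa [neg_neg]⟩
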